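/- Index the 27 lines of the Fermat cubic surface x₀³+x₁³+x₂³+x₃³ = 0 over k̄ as L_{i,n,m} for i,n,m ∈ 𝔽₃, where L_{0,n,m} = {x₀ + ε₃ⁿx₁ = x₂ + ε₃ᵐx₃ = 0}, L_{1,n,m} = {x₀ + ε₃ⁿx₂ = x₁ + ε₃ᵐx₃ = 0}, L_{2,n,m} = {x₀ + ε₃ⁿx₃ = x₁ + ε₃ᵐx₂ = 0}. Then L_{0,n,m} ∩ L_{1,n',m'} ≠ ∅ if and only if m' - m + n - n' = 0 in 𝔽₃. -/

import Mathlib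

/-!
A common point `x` of `L_{0,n,m}` and `L_{1,n',m'}` satisfies
`x₀ = ε^(n+m') x₃ = ε^(n'+m) x₃`, and `x₃ ≠ 0` since otherwise all coordinates vanish;
so the lines meet exactly when `ε^(n+m') = ε^(n'+m)`, i.e. `n + m' = n' + m` in `𝔽₃`.
Conversely `(ε^(n+m'), -ε^m', -ε^m, 1)` then lies on both lines.
-/

/-- The 27 lines `L_{i,n,m}` of the Fermat cubic surface `x₀³+x₁³+x₂³+x₃³ = 0`:
`L_{0,n,m} = {x₀ + ε₃ⁿx₁ = x₂ + ε₃ᵐx₃ = 0}`, `L_{1,n,m} = {x₀ + ε₃ⁿx₂ = x₁ + ε₃ᵐx₃ = 0}`,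
`L_{2,n,m} = {x₀ + ε₃ⁿx₃ = x₁ + ε₃ᵐx₂ = 0}`. -/
def fermatLine (K : Type*) [Field K] (ε : K) :
    Fin 3 → ZMod 3 → ZMod 3 → Set (Projectivization K (Fin 4 → K))
  | 0, n, m => {p | p.rep 0 + ε ^ n.val * p.rep 1 = 0 ∧ p.rep 2 + ε ^ m.val * p.rep 3 = 0}
  | 1, n, m => {p | p.rep 0 + ε ^ n.val * p.rep 2 = 0 ∧ p.rep 1 + ε ^ m.val * p.rep 3 = 0}
  | 2, n, m => {p | p.rep 0 + ε ^ n.val * p.rep 3 = 0 ∧ p.rep 1 + ε ^ m.val * p.rep 2 = 0}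

namespace IsPrimitiveRoot

variable {M : Type*} [CommMonoid M] {ζ : M} {k : ℕ} [NeZero k]

theorem pow_eq_pow_iff_natCast_eq (h : IsPrimitiveRoot ζ k) {a b : ℕ} :
    ζ ^ a = ζ ^ b ↔ (a : ZMod k) = b := by
  rw [(h.isOfFinOrder (NeZero.ne k)).pow_eq_pow_iff_modEq, ← h.eq_orderOf,
    ZMod.natCast_eq_natCast_iff]

theorem pow_val_mul_pow_val_eq_iff (h : IsPrimitiveRoot ζ k) {a b c d : ZMod k} :
    ζ ^ a.val * ζ ^ b.val = ζ ^ c.val * ζ ^ d.val ↔ a + b = c + d := by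
  rw [← pow_add, ← pow_add, h.pow_eq_pow_iff_natCast_eq]
  push_cast
  simp only [ZMod.natCast_val, ZMod.cast_id', id]

end IsPrimitiveRoot

namespace Projectivization

variable {K V : Type*} [Field K] [AddCommGroup V] [Module K V]

theorem exists_rep_iff {P : V → Prop} (hP : ∀ (c : Kˣ) (v : V), P (c • v) ↔ P v) :
    (∃ p : Projectivization K V, P p.rep) ↔ ∃ v ≠ 0, P v := by
  refine ⟨fun ⟨p, hp⟩ => ⟨p.rep, p.rep_nonzero, hp⟩, fun ⟨v, hv, hPv⟩ => ?_⟩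
  obtain ⟨c, hc⟩ := exists_smul_eq_mk_rep K v hv
  exact ⟨mk K v hv, hc ▸ (hP c v).2 hPv⟩

end Projectivization

theorem exists_ne_zero_common_solution_iff {K : Type*} [Field K] (a b c d : K) :
    (∃ v : Fin 4 → K, v ≠ 0 ∧ (v 0 + a * v 1 = 0 ∧ v 2 + b * v 3 = 0) ∧
      (v 0 + c * v 2 = 0 ∧ v 1 + d * v 3 = 0)) ↔ a * d = c * b := by
  constructor
  · rintro ⟨v, hv, ⟨h01, h23⟩, h02, h13⟩
    have hv3 : v 3 ≠ 0 := by
      intro h3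
      have h2 : v 2 = 0 := by simpa [h3] using h23
      have h1 : v 1 = 0 := by simpa [h3] using h13
      have h0 : v 0 = 0 := by simpa [h2] using h02
      exact hv (funext fun i => by fin_cases i <;> assumption)
    refine mul_right_cancel₀ hv3 ?_
    linear_combination -h01 + a * h13 + h02 - c * h23
  · intro h
    refine ⟨![a * d, -d, -b, 1], fun h0 => one_ne_zero (congrFun h0 3), ?_⟩
    simp only [Matrix.cons_val]
    exact ⟨⟨by ring, by ring⟩, by linear_combination h, by ring⟩

theorem stmt16_general (K : Type*) [Field K]
    (ε : K) (hε : IsPrimitiveRoot ε 3) (n m n' m' : ZMod 3) :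
    (fermatLine K ε 0 n m ∩ fermatLine K ε 1 n' m').Nonempty ↔
      m' - m + n - n' = 0 := by
  refine ((Projectivization.exists_rep_iff (V := Fin 4 → K) fun c v => ?_).trans
    (exists_ne_zero_common_solution_iff _ _ _ _)).trans ?_
  · simp only [Units.smul_def, Pi.smul_apply, smul_eq_mul, mul_left_comm _ (c : K), ← mul_add,
      mul_eq_zero, c.ne_zero, false_or]
  · rw [hε.pow_val_mul_pow_val_eq_iff, ← sub_eq_zero]
    ring_nf

/-- `L_{0,n,m} ∩ L_{1,n',m'} ≠ ∅` if and only if `m' - m + n - n' = 0` in `𝔽₃`. -/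
theorem stmt16 (K : Type*) [Field K] [IsAlgClosed K] [CharZero K]
    (ε : K) (hε : IsPrimitiveRoot ε 3) (n m n' m' : ZMod 3) :
    (fermatLine K ε 0 n m ∩ fermatLine K ε 1 n' m').Nonempty ↔
      m' - m + n - n' = 0 :=
  stmt16_general K ε hε n m n' m'
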